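/- arXiv:2005.08939 — 6 statements merged into one kernel-verified Lean document; each statement's English description precedes it below -/
import Mathlib

section
/- For integers p ≥ 2 and q with gcd(p,q)=1, every term of the sequence g_n = p^{2n} * binom(n + q/p, n) (generalized binomial coefficient with rational upper argument) is an integer. -/
/-!
Since `p ^ n * ∏ i < n, (n + q / p - i) = ∏ i < n, (p * n + q - p * i)`, it suffices that
`n! ∣ p ^ n * ∏ i < n, (a - p * i)` for all integers `p` and `a`. Check this one prime power
`ℓ ^ k ∣ n!` at a time. If `ℓ ∣ p`, then `k ≤ n`, so `p ^ n` absorbs `ℓ ^ k`. Otherwise pick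
`u` with `u * p ≡ 1 [ZMOD ℓ ^ k]`: then `u ^ n` times the product is congruent to
`∏ i < n, (u * a - i)`, a product of `n` consecutive integers and hence a multiple of `n!`.
-/

/-- Generalized binomial coefficient `x(x-1)⋯(x-n+1)/n!` for rational `x`. -/
noncomputable def gchoose (x : ℚ) (n : ℕ) : ℚ :=
  (∏ i ∈ Finset.range n, (x - i)) / (n.factorial : ℚ)

open Finset Nat

theorem Int.factorial_dvd_prod_sub (r : ℤ) (n : ℕ) :
    (n ! : ℤ) ∣ ∏ j ∈ Finset.range n, (r - j) := by
  rw [← descPochhammer_eval_eq_prod_range, Polynomial.eval_eq_smeval,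
    Ring.descPochhammer_eq_factorial_smul_choose, nsmul_eq_mul]
  exact dvd_mul_right _ _

theorem Int.dvd_prod_sub_mul_of_isCoprime {m p : ℤ} (a : ℤ) {n : ℕ} (hm : m ∣ n !)
    (hpm : IsCoprime p m) : m ∣ ∏ j ∈ Finset.range n, (a - p * j) := by
  obtain ⟨u, v, huv⟩ := hpm
  have hcong : u ^ n * ∏ j ∈ Finset.range n, (a - p * j) ≡
      ∏ j ∈ Finset.range n, (u * a - j) [ZMOD m] := by
    rw [← card_range n, ← prod_const, card_range, ← prod_mul_distrib]
    refine Int.ModEq.prod fun j _ => Int.modEq_iff_dvd.2 ⟨-(v * j), ?_⟩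
    linear_combination (j : ℤ) * huv
  have hu : IsCoprime (u ^ n) m := IsCoprime.pow_left ⟨p, v, by linear_combination huv⟩
  refine hu.symm.dvd_of_dvd_mul_left ?_
  have h := dvd_sub (hm.trans (Int.factorial_dvd_prod_sub (u * a) n)) hcong.dvd
  rwa [sub_sub_cancel] at h

theorem Nat.Prime.le_of_pow_dvd_factorial {ℓ k n : ℕ} (hℓ : ℓ.Prime) (h : ℓ ^ k ∣ n !) :
    k ≤ n := by
  have hk : (k : ℕ∞) ≤ n / (ℓ - 1) :=
    (pow_dvd_iff_le_emultiplicity.1 h).trans (hℓ.emultiplicity_factorial_le_div_pred n)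
  exact (ENat.natCast_le_natCast.1 hk).trans (Nat.div_le_self _ _)

theorem Int.factorial_dvd_pow_mul_prod_sub_mul (p a : ℤ) (n : ℕ) :
    (n ! : ℤ) ∣ p ^ n * ∏ j ∈ Finset.range n, (a - p * j) := by
  rw [Int.natCast_dvd, Nat.dvd_iff_prime_pow_dvd_dvd]
  intro ℓ k hℓ hk
  rw [← Int.natCast_dvd, Nat.cast_pow]
  by_cases hℓp : (ℓ : ℤ) ∣ p
  · exact ((pow_dvd_pow _ (hℓ.le_of_pow_dvd_factorial hk)).trans
      (pow_dvd_pow_of_dvd hℓp n)).mul_right _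
  · have hpℓ : IsCoprime p (ℓ ^ k : ℤ) :=
      ((Nat.prime_iff_prime_int.1 hℓ).coprime_iff_not_dvd.2 hℓp).symm.pow_right
    exact (Int.dvd_prod_sub_mul_of_isCoprime a (by exact_mod_cast hk) hpℓ).mul_left _

theorem pow_mul_gchoose (c x : ℚ) (n : ℕ) :
    c ^ n * gchoose x n = (∏ i ∈ Finset.range n, (c * x - c * i)) / n ! := by
  simp only [gchoose, ← mul_sub, prod_mul_distrib, prod_const, card_range, mul_div_assoc]

theorem catbert_g_integer_general (p q : ℤ) (hp : 2 ≤ p) (n : ℕ) :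
    ∃ m : ℤ, (p : ℚ) ^ (2 * n) * gchoose ((n : ℚ) + (q : ℚ) / (p : ℚ)) n = (m : ℚ) := by
  have hp0 : (p : ℚ) ≠ 0 := by exact_mod_cast (by omega : p ≠ 0)
  obtain ⟨m, hm⟩ := Int.factorial_dvd_pow_mul_prod_sub_mul p (p * n + q) n
  refine ⟨m, ?_⟩
  have hx : (p : ℚ) * (n + q / p) = ((p * n + q : ℤ) : ℚ) := by
    push_cast
    field_simp
  rw [two_mul, pow_add, mul_assoc, pow_mul_gchoose, hx, ← mul_div_assoc,
    div_eq_iff (by positivity)]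
  exact_mod_cast hm.trans (mul_comm _ _)

/-- Every term of `g_n = p^{2n} * binom(n + q/p, n)` is an integer. -/
theorem catbert_g_integer (p q : ℤ) (hp : 2 ≤ p) (hpq : Int.gcd p q = 1) (n : ℕ) :
    ∃ m : ℤ, (p : ℚ) ^ (2 * n) * gchoose ((n : ℚ) + (q : ℚ) / (p : ℚ)) n = (m : ℚ) :=
  catbert_g_integer_general p q hp n
end

section
/- Let G_{i,j} = 1/g_{i+j+a} where g_n = p^{2n} binom(n+q/p, n), and L_{n,k} = (-1)^{n+k} p^{2k} binom(n+k+a+q/p-1, k) binom(n+a, k+a). Then for every n ≥ 1, the sum over k from 0 to n of L_{n,k} G_{k,n-1} equals 0. -/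
/-- The generalized Catalan numbers `g_n = p^{2n} binom(n + q/p, n)`. -/
noncomputable def gcat (p q : ℤ) (n : ℕ) : ℚ :=
  (p : ℚ) ^ (2 * n) * gchoose ((n : ℚ) + (q : ℚ) / (p : ℚ)) n

/-- The Hankel matrix entries `G_{i,j} = 1/g_{i+j+a}`. -/
noncomputable def Gmat (p q : ℤ) (a i j : ℕ) : ℚ :=
  1 / gcat p q (i + j + a)

/-- `L_{n,k} = (-1)^{n+k} p^{2k} binom(n+k+a+q/p-1, k) binom(n+a, k+a)`. -/
noncomputable def Lmat (p q : ℤ) (a n k : ℕ) : ℚ :=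
  (-1 : ℚ) ^ (n + k) * (p : ℚ) ^ (2 * k)
    * gchoose ((n : ℚ) + (k : ℚ) + (a : ℚ) + (q : ℚ) / (p : ℚ) - 1) k
    * gchoose ((n : ℚ) + (a : ℚ)) (k + a)

open Finset Nat Polynomial

theorem gchoose_mul_factorial (x : ℚ) (n : ℕ) :
    gchoose x n * n ! = ∏ i ∈ range n, (x - i) :=
  div_mul_cancel₀ _ (mod_cast n.factorial_ne_zero)

theorem gchoose_natCast (n k : ℕ) : gchoose n k = n.choose k := by
  apply mul_right_cancel₀ (b := (k ! : ℚ)) (mod_cast k.factorial_ne_zero)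
  rw [gchoose_mul_factorial, ← descPochhammer_eval_eq_prod_range,
    descPochhammer_eval_eq_descFactorial, descFactorial_eq_factorial_mul_choose]
  push_cast
  ring

theorem gchoose_add_mul_factorial (y : ℚ) (k m : ℕ) :
    gchoose (y + k) (k + m) * (k + m)! = gchoose (y + k) k * k ! * (gchoose y m * m !) := by
  simp only [gchoose_mul_factorial, prod_range_add, cast_add]
  congr 1
  exact prod_congr rfl fun j _ => by ring

theorem gcat_add_mul_factorial (p q : ℤ) (k m : ℕ) :
    gcat p q (k + m) * (k + m)! =
      (p : ℚ) ^ (2 * k) * gchoose ((k + m : ℕ) + (q : ℚ) / p) k * k ! *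
        (gcat p q m * m !) := by
  have hx : ((k + m : ℕ) : ℚ) + (q : ℚ) / p = ((m : ℚ) + q / p) + k := by push_cast; ring
  rw [gcat, gcat, hx, mul_assoc, gchoose_add_mul_factorial, mul_add, pow_add]
  ring

theorem choose_add_mul_factorial {n k : ℕ} (a : ℕ) (hk : k ≤ n) :
    (n + a).choose (k + a) * (k + a)! * n ! = n.choose k * k ! * (n + a)! := by
  have h := choose_mul_factorial_mul_factorial (n := n + a) (k := k + a) (by omega)
  rw [show n + a - (k + a) = n - k by omega] at h
  apply Nat.eq_of_mul_eq_mul_right (factorial_pos (n - k))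
  rw [mul_right_comm _ (n !), h, mul_right_comm _ (n + a)!, choose_mul_factorial_mul_factorial hk,
    mul_comm]

theorem sum_neg_one_pow_mul_choose_mul_eval_eq_zero {R : Type*} [CommRing R] {n : ℕ}
    (P : R[X]) (hP : P.natDegree < n) :
    ∑ k ∈ range (n + 1), (-1 : R) ^ (n + k) * n.choose k * P.eval (k : R) = 0 := by
  have h := congr_fun (Polynomial.fwdDiff_iter_eq_zero_of_degree_lt hP) 0
  rw [fwdDiff_iter_eq_sum_shift, Pi.zero_apply] at h
  rw [← h]
  refine sum_congr rfl fun k hk => ?_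
  have hnk : n + k = (n - k) + 2 * k := by have := mem_range.mp hk; omega
  simp [hnk, pow_add, pow_mul]

theorem Lmat_mul_Gmat {p q : ℤ} {a s k : ℕ} (hg : gcat p q (k + (s + a)) ≠ 0)
    (hk : k ≤ s + 1) :
    Lmat p q a (s + 1) k * Gmat p q a k s =
      (s + 1 + a)! / ((s + 1)! * (s + a)! * gcat p q (s + a)) *
        ((-1) ^ (s + 1 + k) * (s + 1).choose k * (k + a + s).descFactorial s) := by
  have hsplit := gcat_add_mul_factorial p q k (s + a)
  have hfactors : (p : ℚ) ^ (2 * k) * gchoose ((k + (s + a) : ℕ) + (q : ℚ) / p) k * k ! *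
      (gcat p q (s + a) * (s + a)!) ≠ 0 := by
    rw [← hsplit]; exact mul_ne_zero hg (mod_cast factorial_ne_zero _)
  simp only [mul_ne_zero_iff] at hfactors
  obtain ⟨⟨⟨hp, hx⟩, -⟩, hc, -⟩ := hfactors
  have hchoose : ((s + 1 + a).choose (k + a) * (k + a)! * (s + 1)! : ℚ) =
      (s + 1).choose k * k ! * (s + 1 + a)! := mod_cast choose_add_mul_factorial a hk
  have hdesc := factorial_mul_descFactorial (n := k + a + s) (k := s) (by omega)
  rw [show k + a + s - s = k + a by omega] at hdesc
  have harg : ((s + 1 : ℕ) : ℚ) + k + a + q / p - 1 = ((k + (s + a) : ℕ) : ℚ) + q / p := by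
    push_cast; ring
  rw [Lmat, Gmat, harg,
    show ((s + 1 : ℕ) : ℚ) + a = ((s + 1 + a : ℕ) : ℚ) by push_cast; ring, gchoose_natCast,
    show k + s + a = k + (s + a) by ring,
    eq_div_of_mul_eq (mod_cast factorial_ne_zero _) hsplit]
  field_simp
  rw [show k + (s + a) = k + a + s by ring, ← hdesc]
  push_cast
  linear_combination ((k + a + s).descFactorial s : ℚ) * hchoose

theorem catbert_orthogonal_one_general (p q : ℤ) (a : ℕ)
    (hg : ∀ m : ℕ, gcat p q m ≠ 0) (n : ℕ) (hn : 1 ≤ n) :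
    ∑ k ∈ Finset.range (n + 1), Lmat p q a n k * Gmat p q a k (n - 1) = 0 := by
  obtain ⟨s, rfl⟩ := Nat.exists_eq_add_of_le' hn
  set P : ℚ[X] := (descPochhammer ℚ s).comp (X + C ((a + s : ℕ) : ℚ))
  have hP : P.natDegree < s + 1 := by
    rw [natDegree_comp, descPochhammer_natDegree, natDegree_X_add_C, mul_one]; omega
  have hPeval (k : ℕ) : P.eval (k : ℚ) = (k + a + s).descFactorial s := by
    simp [P, ← descPochhammer_eval_eq_descFactorial, add_assoc]
  calc ∑ k ∈ range (s + 1 + 1), Lmat p q a (s + 1) k * Gmat p q a k (s + 1 - 1)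
      = ∑ k ∈ range (s + 1 + 1), (s + 1 + a)! / ((s + 1)! * (s + a)! * gcat p q (s + a)) *
          ((-1) ^ (s + 1 + k) * (s + 1).choose k * P.eval (k : ℚ)) :=
        sum_congr rfl fun k hk => by
          rw [Nat.add_sub_cancel, Lmat_mul_Gmat (hg _) (mem_range_succ_iff.mp hk), hPeval]
    _ = 0 := by rw [← mul_sum, sum_neg_one_pow_mul_choose_mul_eval_eq_zero P hP, mul_zero]

theorem catbert_orthogonal_one (p q : ℤ) (a : ℕ) (hp : 2 ≤ p) (hq : Int.gcd p q = 1)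
    (hg : ∀ m : ℕ, gcat p q m ≠ 0) (n : ℕ) (hn : 1 ≤ n) :
    ∑ k ∈ Finset.range (n + 1), Lmat p q a n k * Gmat p q a k (n - 1) = 0 :=
  catbert_orthogonal_one_general p q a hg n hn
end

section
/- With G, L as above, the product L G L^T (restricted to any finite n×n upper-left block, where L is lower triangular) is a diagonal matrix; equivalently, sum over k of L_{n,k} G_{k,m} = 0 for all 0 ≤ m < n. -/
/-!
With `ρ = q / p`, the entry `1 / g_N` is `p ^ (-2N)` times `binom(N + ρ, N)⁻¹`, which is the moment
`ρ ∫₀¹ t ^ N (1 - t) ^ (ρ - 1) dt`, and row `n` of `L` lists the coefficients of the Jacobi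
polynomial of degree `n` for the weight `t ^ a (1 - t) ^ (ρ - 1)`; the claim is its orthogonality
to `t ^ m`, checked algebraically. Chu–Vandermonde rewrites row `n` as a combination of the
polynomials `t ^ (a + l) (1 - t) ^ (n - l)`. Their moments against `t ^ m` are iterated forward
differences of the moment sequence, which have a closed form, and what remains is the alternating
sum `∑ l, (-1) ^ l binom(n, l) binom(a + m + l, m)`: an `n`-th forward difference of a polynomial
of degree `m < n`, hence zero.
-/

open Finset fwdDiff Polynomial

theorem gchoose_eq_choose (x : ℚ) (k : ℕ) : gchoose x k = Ring.choose x k := by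
  rw [Ring.choose_eq_smul, gchoose, ← descPochhammer_eval_eq_prod_range, smul_eq_mul,
    div_eq_inv_mul, ← descPochhammer_map (algebraMap ℤ ℚ), eval_map_algebraMap, aeval_eq_smeval]

section FwdDiff

variable {R : Type*} [CommRing R]

theorem sum_range_neg_one_pow_mul_choose_mul_eq_fwdDiff_iter (f : ℕ → R) (j u : ℕ) :
    ∑ i ∈ range (j + 1), (-1) ^ i * j.choose i * f (u + i) = (-1) ^ j * Δ_[1] ^[j] f u := by
  rw [fwdDiff_iter_eq_sum_shift, mul_sum]
  refine sum_congr rfl fun i hi => ?_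
  obtain ⟨d, rfl⟩ := Nat.exists_eq_add_of_le (Nat.lt_succ_iff.mp (mem_range.mp hi))
  rw [zsmul_eq_mul, Nat.add_sub_cancel_left, smul_eq_mul, mul_one]
  have hsq : (-1 : R) ^ d * (-1) ^ d = 1 := by rw [← mul_pow]; simp
  push_cast
  linear_combination (-((-1) ^ i * ((i + d).choose i : R) * f (u + i))) * hsq

theorem sum_range_neg_one_pow_mul_choose_mul_choose_eq_zero {n m : ℕ} (hm : m < n) (c : ℕ) :
    ∑ l ∈ range (n + 1), (-1 : ℤ) ^ l * n.choose l * (c + l).choose m = 0 := by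
  rw [sum_range_neg_one_pow_mul_choose_mul_eq_fwdDiff_iter (fun x => (x.choose m : ℤ))]
  obtain ⟨k, rfl⟩ := Nat.exists_eq_add_of_lt hm
  have hchoose : Δ_[1] ^[m] (fun x => (x.choose m : ℤ)) = fun _ => 1 := by
    simpa using fwdDiff_iter_choose 0 m
  rw [show m + k + 1 = k + 1 + m by ring, Function.iterate_add_apply, hchoose,
    Function.iterate_succ_apply, fwdDiff_const]
  simp [fwdDiff_iter_eq_sum_shift]

end FwdDiff

theorem sum_range_sum_range_succ_comm {M : Type*} [AddCommMonoid M] (N : ℕ) (G : ℕ → ℕ → M) :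
    ∑ k ∈ range N, ∑ l ∈ range (k + 1), G k l = ∑ l ∈ range N, ∑ i ∈ range (N - l), G (l + i) l := by
  rw [← sum_range_diag_flip]
  refine sum_congr rfl fun k _ => sum_congr rfl fun l hl => ?_
  rw [Nat.add_sub_cancel' (Nat.lt_succ_iff.mp (mem_range.mp hl))]

section Field

variable {K : Type*} [Field K] [CharZero K]

theorem Ring.choose_add_one_add_one (x : K) (k : ℕ) :
    Ring.choose (x + 1) (k + 1) = (x + 1) * Ring.choose x k / (k + 1) := by
  rw [eq_div_iff (Nat.cast_add_one_ne_zero k), mul_comm, ← Nat.cast_add_one, ← nsmul_eq_mul]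
  simpa [Ring.choose_one_right] using Ring.choose_add_smul_choose x k 1

theorem Ring.choose_add_natCast (x : K) (a k : ℕ) :
    Ring.choose (x + a) k = ∑ l ∈ range (k + 1), Ring.choose x l * (a.choose (k - l) : K) := by
  rw [Ring.add_choose_eq k (Commute.all _ _),
    Nat.sum_antidiagonal_eq_sum_range_succ (fun i j => Ring.choose x i * Ring.choose (a : K) j)]
  simp only [Ring.choose_natCast]

/-- For `0 < ρ` this is the moment `ρ ∫₀¹ t ^ N (1 - t) ^ (ρ - 1) dt`. -/
noncomputable def betaMoment (ρ : K) (N : ℕ) : K :=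
  (Ring.choose ((N : K) + ρ) N)⁻¹

/-- The coefficient of `t ^ (k + a)` in the degree-`n` orthogonal polynomial for the weight
`t ^ a (1 - t) ^ (ρ - 1)`. -/
noncomputable def jacobiCoeff (ρ : K) (a n k : ℕ) : K :=
  (-1) ^ k * Ring.choose (n + k + a + ρ - 1) k * (n + a).choose (k + a)

variable {ρ : K}

theorem fwdDiff_iter_betaMoment (hρ : ∀ N : ℕ, Ring.choose ((N : K) + ρ) N ≠ 0) (j u : ℕ) :
    Δ_[1] ^[j] (betaMoment ρ) u =
      (-1) ^ j * Ring.choose (ρ + j - 1) j / (u + j).choose j * betaMoment ρ (u + j) := by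
  induction j generalizing u with
  | zero => simp
  | succ j ih =>
    have hB2 : ((u + j + 1).choose (j + 1) : K) = (u + j + 1) * (u + j).choose j / (j + 1) := by
      rw [eq_div_iff (Nat.cast_add_one_ne_zero j)]
      exact_mod_cast (Nat.add_one_mul_choose_eq (u + j) j).symm
    have hB1 : ((u + j + 1).choose j : K) = (u + j + 1) * (u + j).choose j / (u + 1) := by
      rw [eq_div_iff (Nat.cast_add_one_ne_zero u)]
      have := Nat.choose_mul_succ_eq (u + j) j
      rw [show u + j + 1 - j = u + 1 by omega] at this
      exact_mod_cast this.symm.trans (mul_comm _ _)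
    have hN : (u + j + 1 : K) ≠ 0 := by exact_mod_cast Nat.succ_ne_zero (u + j)
    have hshift : ((u + j + 1 : ℕ) : K) + ρ = ((u + j : ℕ) : K) + ρ + 1 := by push_cast; ring
    have hsucc : ((u + j : ℕ) : K) + ρ + 1 ≠ 0 := fun h => hρ (u + j + 1) <| by
      rw [hshift, Ring.choose_add_one_add_one, h, zero_mul, zero_div]
    rw [Function.iterate_succ_apply', fwdDiff, ih, ih, show u + 1 + j = u + j + 1 by ring,
      show u + (j + 1) = u + j + 1 by ring]
    unfold betaMoment
    rw [hshift,
      show ρ + ((j + 1 : ℕ) : K) - 1 = ρ + j - 1 + 1 by push_cast; ring,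
      Ring.choose_add_one_add_one, Ring.choose_add_one_add_one, hB2, hB1]
    push_cast at *
    field_simp
    ring

theorem sum_range_neg_one_pow_mul_choose_mul_betaMoment
    (hρ : ∀ N : ℕ, Ring.choose ((N : K) + ρ) N ≠ 0) (j u : ℕ) :
    ∑ i ∈ range (j + 1), (-1) ^ i * j.choose i * betaMoment ρ (u + i) =
      Ring.choose (ρ + j - 1) j / (u + j).choose j * betaMoment ρ (u + j) := by
  rw [sum_range_neg_one_pow_mul_choose_mul_eq_fwdDiff_iter, fwdDiff_iter_betaMoment hρ,
    mul_div_assoc, ← mul_assoc, ← mul_assoc, ← pow_add, (Even.add_self j).neg_one_pow, one_mul]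

theorem sum_jacobiCoeff_mul (g : ℕ → K) (a n : ℕ) :
    ∑ k ∈ range (n + 1), jacobiCoeff ρ a n k * g k =
      ∑ l ∈ range (n + 1), (-1) ^ l * Ring.choose (ρ + n - 1) l * (n + a).choose (a + l)
        * ∑ i ∈ range (n - l + 1), (-1) ^ i * (n - l).choose i * g (l + i) := by
  have hsplit (k : ℕ) :
      Ring.choose (n + k + a + ρ - 1) k = Ring.choose (ρ + n - 1 + (a + k : ℕ)) k := by
    congr 1; push_cast; ring
  simp only [jacobiCoeff, hsplit, Ring.choose_add_natCast, mul_sum, sum_mul]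
  rw [sum_range_sum_range_succ_comm]
  refine sum_congr rfl fun l hl => ?_
  rw [show n + 1 - l = n - l + 1 by have := mem_range.mp hl; omega]
  refine sum_congr rfl fun i hi => ?_
  have hchoose : ((a + (l + i)).choose i * (n + a).choose (l + i + a) : K)
      = (n + a).choose (a + l) * (n - l).choose i := by
    have := Nat.choose_mul (n := n + a) (k := a + l + i) (s := a + l)
      (by have := mem_range.mp hi; omega)
    rw [Nat.choose_symm_add, show n + a - (a + l) = n - l by omega,
      show a + l + i - (a + l) = i by omega] at this
    rw [show l + i + a = a + l + i by ring, show a + (l + i) = a + l + i by ring]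
    exact_mod_cast (mul_comm _ _).trans this
  rw [Nat.add_sub_cancel_left, pow_add]
  linear_combination (-1) ^ l * (-1) ^ i * Ring.choose (ρ + n - 1) l * g (l + i) * hchoose

theorem sum_jacobiCoeff_mul_betaMoment_eq_zero (hρ : ∀ N : ℕ, Ring.choose ((N : K) + ρ) N ≠ 0)
    (a : ℕ) {n m : ℕ} (hm : m < n) :
    ∑ k ∈ range (n + 1), jacobiCoeff ρ a n k * betaMoment ρ (k + m + a) = 0 := by
  set σ := ρ + n - 1 with hσ
  rw [sum_jacobiCoeff_mul (fun k => betaMoment ρ (k + m + a))]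
  have hterm : ∀ l ∈ range (n + 1),
      (-1) ^ l * Ring.choose σ l * (n + a).choose (a + l)
        * ∑ i ∈ range (n - l + 1), (-1) ^ i * (n - l).choose i * betaMoment ρ (l + i + m + a)
      = Ring.choose σ n / (n + m + a).choose m * betaMoment ρ (n + m + a)
          * ((-1) ^ l * n.choose l * (a + m + l).choose m) := by
    intro l hl
    have hln : l ≤ n := Nat.lt_succ_iff.mp (mem_range.mp hl)
    simp only [show ∀ i, l + i + m + a = m + a + l + i by intro i; ring]
    rw [sum_range_neg_one_pow_mul_choose_mul_betaMoment hρ,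
      show m + a + l + (n - l) = n + m + a by omega,
      show ρ + ((n - l : ℕ) : K) - 1 = σ - l by rw [hσ, Nat.cast_sub hln]; ring]
    have hσl : Ring.choose σ l * Ring.choose (σ - l) (n - l) = n.choose l * Ring.choose σ n := by
      rw [← Ring.choose_smul_choose σ hln, nsmul_eq_mul]
    have hnat : ((n + m + a).choose (n - l) * (a + m + l).choose m : K)
        = (n + a).choose (a + l) * (n + m + a).choose m := by
      have := Nat.choose_mul (n := n + m + a) (k := a + m + l) (s := m) (by omega)
      rw [Nat.choose_symm_of_eq_add (show n + m + a = a + m + l + (n - l) by omega),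
        show n + m + a - m = n + a by omega, show a + m + l - m = a + l by omega] at this
      exact_mod_cast this.trans (mul_comm _ _)
    have hC1 : ((n + m + a).choose (n - l) : K) ≠ 0 := by
      exact_mod_cast (Nat.choose_pos (by omega)).ne'
    have hC2 : ((n + m + a).choose m : K) ≠ 0 := by exact_mod_cast (Nat.choose_pos (by omega)).ne'
    field_simp
    linear_combination ((n + a).choose (a + l) : K) * ((n + m + a).choose m : K)
      * betaMoment ρ (n + m + a) * hσl - (n.choose l : K) * Ring.choose σ n
      * betaMoment ρ (n + m + a) * hnat
  have hvanish : ∑ l ∈ range (n + 1), ((-1) ^ l * n.choose l * (a + m + l).choose m : K) = 0 := by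
    exact_mod_cast sum_range_neg_one_pow_mul_choose_mul_choose_eq_zero hm (a + m)
  rw [sum_congr rfl hterm, ← mul_sum, hvanish, mul_zero]

end Field

theorem catbert_LG_upper_triangular_general (p q : ℤ) (a : ℕ)
    (hg : ∀ m : ℕ, gcat p q m ≠ 0) (n m : ℕ) (hm : m < n) :
    ∑ k ∈ Finset.range (n + 1), Lmat p q a n k * Gmat p q a k m = 0 := by
  have hp : (p : ℚ) ≠ 0 := fun h0 => hg 1 (by simp [gcat, h0])
  have hρ : ∀ N : ℕ, Ring.choose ((N : ℚ) + q / p) N ≠ 0 := fun N h =>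
    hg N (by rw [gcat, gchoose_eq_choose, h, mul_zero])
  have hterm : ∀ k ∈ range (n + 1), Lmat p q a n k * Gmat p q a k m
      = (-1) ^ n / (p : ℚ) ^ (2 * (m + a))
        * (jacobiCoeff ((q : ℚ) / p) a n k * betaMoment ((q : ℚ) / p) (k + m + a)) := by
    intro k _
    rw [Lmat, Gmat, gcat, jacobiCoeff, betaMoment, gchoose_eq_choose, gchoose_eq_choose,
      gchoose_eq_choose, ← Nat.cast_add n a, Ring.choose_natCast,
      show 2 * (k + m + a) = 2 * k + 2 * (m + a) by ring, pow_add, pow_add]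
    generalize (q : ℚ) / p = ρ
    field_simp
  rw [sum_congr rfl hterm, ← mul_sum, sum_jacobiCoeff_mul_betaMoment_eq_zero hρ a hm, mul_zero]

/-- `L G Lᵀ` is diagonal; equivalently `∑_k L_{n,k} G_{k,m} = 0` for `m < n`. -/
theorem catbert_LG_upper_triangular (p q : ℤ) (a : ℕ) (hp : 2 ≤ p) (hq : Int.gcd p q = 1)
    (hg : ∀ m : ℕ, gcat p q m ≠ 0) (n m : ℕ) (hm : m < n) :
    ∑ k ∈ Finset.range (n + 1), Lmat p q a n k * Gmat p q a k m = 0 :=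
  catbert_LG_upper_triangular_general p q a hg n m hm
end

section
/- Let q be a prime, p an integer with gcd(q,p)=1, n an integer with p²n + pq ≡ 0 (mod q), and k a positive integer with k not ≡ 0 (mod q). Then p^{2k} binom(n + q/p, k) is an integer divisible by q. -/
open Finset Nat

theorem prod_range_sub_eq_factorial_mul_ringChoose (a : ℤ) (k : ℕ) :
    ∏ i ∈ range k, (a - i) = k ! * Ring.choose a k := by
  rw [← descPochhammer_eval_eq_prod_range, Polynomial.eval_eq_smeval,
    Ring.descPochhammer_eq_factorial_smul_choose, nsmul_eq_mul]

theorem prime_mul_factorial_dvd_prod_range_sub {q a : ℤ} {k : ℕ} (hq : Prime q)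
    (hqa : q ∣ a) (hqk : ¬ q ∣ k) : q * k ! ∣ ∏ i ∈ range k, (a - i) := by
  obtain _ | j := k
  · simp at hqk
  have hsplit : ((j + 1 : ℕ) : ℤ) * Ring.choose a (j + 1) = a * Ring.choose (a - 1) j := by
    apply mul_left_cancel₀ (show (j ! : ℤ) ≠ 0 by positivity)
    calc (j ! : ℤ) * ((j + 1 : ℕ) * Ring.choose a (j + 1))
        = ∏ i ∈ range (j + 1), (a - i) := by
          rw [prod_range_sub_eq_factorial_mul_ringChoose, factorial_succ, Nat.cast_mul]; ring
      _ = (∏ i ∈ range j, (a - 1 - i)) * a := by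
          rw [prod_range_succ']; push_cast; simp only [sub_zero, sub_sub, add_comm]
      _ = j ! * (a * Ring.choose (a - 1) j) := by
          rw [prod_range_sub_eq_factorial_mul_ringChoose]; ring
  have hq_choose : q ∣ Ring.choose a (j + 1) :=
    (hq.dvd_or_dvd (hsplit ▸ dvd_mul_of_dvd_left hqa _)).resolve_left hqk
  rw [prod_range_sub_eq_factorial_mul_ringChoose, mul_comm q]
  exact mul_dvd_mul_left _ hq_choose

theorem Int.dvd_of_forall_prime_pow_dvd {d n : ℤ}
    (h : ∀ ℓ e : ℕ, ℓ.Prime → (ℓ : ℤ) ^ e ∣ d → (ℓ : ℤ) ^ e ∣ n) : d ∣ n := by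
  rw [← Int.natAbs_dvd_natAbs, Nat.dvd_iff_prime_pow_dvd_dvd]
  intro ℓ e hℓ hd
  exact_mod_cast Int.natCast_dvd.mp (h ℓ e hℓ (by exact_mod_cast Int.natCast_dvd.mpr hd))

theorem Nat.le_of_prime_pow_dvd_factorial {ℓ e k : ℕ} (hℓ : ℓ.Prime) (h : ℓ ^ e ∣ k !) :
    e ≤ k := by
  have := Fact.mk hℓ
  exact ((padicValNat_dvd_iff_le (factorial_ne_zero k)).mp h).trans (padicValNat_factorial_le ℓ k)

theorem dvd_prod_range_sub_mul_of_dvd_mul_sub_one {M t p N : ℤ} {k : ℕ} (htp : M ∣ t * p - 1)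
    (h : M ∣ ∏ i ∈ range k, (t * N - i)) : M ∣ ∏ i ∈ range k, (N - p * i) := by
  obtain ⟨w, hw⟩ := htp
  have hMt : IsCoprime M (t ^ k) := IsCoprime.pow_right ⟨-w, p, by linear_combination hw⟩
  have hmod : ∏ i ∈ range k, (t * N - i) ≡ t ^ k * ∏ i ∈ range k, (N - p * i) [ZMOD M] := by
    rw [pow_eq_prod_const t, ← prod_mul_distrib]
    refine Int.ModEq.prod fun i _ => (Int.modEq_iff_dvd.mpr ⟨-(i * w), ?_⟩)
    linear_combination -(i : ℤ) * hw
  exact hMt.dvd_of_dvd_mul_left ((Int.ModEq.dvd_iff hmod).mp h)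

theorem prime_mul_factorial_dvd_pow_mul_prod_range_sub_mul {q p N : ℤ} {k : ℕ}
    (hq : Prime q) (hqp : IsCoprime q p) (hqN : q ∣ N) (hqk : ¬ q ∣ k) :
    q * k ! ∣ p ^ k * ∏ i ∈ range k, (N - p * i) := by
  refine Int.dvd_of_forall_prime_pow_dvd fun ℓ e hℓ hdvd => ?_
  by_cases hℓp : (ℓ : ℤ) ∣ p
  · have hℓk : (ℓ : ℤ) ^ e ∣ k ! :=
      ((hqp.of_isCoprime_of_dvd_right hℓp).symm.pow_left).dvd_of_dvd_mul_left hdvd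
    have hek : e ≤ k := Nat.le_of_prime_pow_dvd_factorial hℓ (by exact_mod_cast hℓk)
    exact ((pow_dvd_pow _ hek).trans (pow_dvd_pow_of_dvd hℓp k)).mul_right _
  · have hpℓ : IsCoprime p ((ℓ : ℤ) ^ e) :=
      ((Nat.prime_iff_prime_int.mp hℓ).coprime_iff_not_dvd.mpr hℓp).symm.pow_right
    obtain ⟨t, c, htc⟩ := hpℓ
    refine dvd_mul_of_dvd_right (dvd_prod_range_sub_mul_of_dvd_mul_sub_one (t := t) ⟨-c, ?_⟩ ?_) _
    · linear_combination htc
    · exact hdvd.trans (prime_mul_factorial_dvd_prod_range_sub hq (hqN.mul_left t) hqk)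

theorem pow_two_mul_mul_gchoose_div_eq (p N : ℤ) (k : ℕ) (hp : p ≠ 0) :
    (p : ℚ) ^ (2 * k) * gchoose (N / p) k =
      ((p ^ k * ∏ i ∈ range k, (N - p * i) : ℤ) : ℚ) / k ! := by
  rw [gchoose, mul_div_assoc', pow_mul, pow_eq_prod_const, pow_eq_prod_const p,
    ← prod_mul_distrib, ← prod_mul_distrib]
  push_cast
  congr 1
  refine prod_congr rfl fun i _ => ?_
  field_simp

theorem lucas_variant_one_general (q p n : ℤ) (hq : Prime q) (hqp : Int.gcd q p = 1)
    (hn : q ∣ p ^ 2 * n + p * q) (k : ℕ) (hkq : ¬ (q : ℤ) ∣ (k : ℤ)) :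
    ∃ m : ℤ, (p : ℚ) ^ (2 * k) * gchoose ((n : ℚ) + (q : ℚ) / (p : ℚ)) k = (m : ℚ)
      ∧ q ∣ m := by
  have hqp : IsCoprime q p := Int.isCoprime_iff_gcd_eq_one.mpr hqp
  have hp : p ≠ 0 := by
    rintro rfl
    exact hq.not_isUnit (isCoprime_zero_right.mp hqp)
  have hqN : q ∣ p * n + q :=
    hqp.dvd_of_dvd_mul_left (by rwa [show p * (p * n + q) = p ^ 2 * n + p * q by ring])
  obtain ⟨c, hc⟩ := prime_mul_factorial_dvd_pow_mul_prod_range_sub_mul hq hqp hqN hkq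
  refine ⟨q * c, ?_, dvd_mul_right q c⟩
  have hx : (n : ℚ) + q / p = ((p * n + q : ℤ) : ℚ) / p := by
    push_cast
    field_simp
  rw [hx, pow_two_mul_mul_gchoose_div_eq p _ k hp, hc]
  push_cast
  field_simp

/-- If `q` is prime, `gcd(q,p)=1`, `q ∣ p²n + pq`, and `q ∤ k > 0`, then
`p^{2k} binom(n + q/p, k)` is an integer divisible by `q`. -/
theorem lucas_variant_one (q p n : ℤ) (hq : Prime q) (hqp : Int.gcd q p = 1)
    (hn : q ∣ p ^ 2 * n + p * q) (k : ℕ) (hk : 0 < k) (hkq : ¬ (q : ℤ) ∣ (k : ℤ)) :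
    ∃ m : ℤ, (p : ℚ) ^ (2 * k) * gchoose ((n : ℚ) + (q : ℚ) / (p : ℚ)) k = (m : ℚ)
      ∧ q ∣ m :=
  lucas_variant_one_general q p n hq hqp hn k hkq
end

section
/- Let p be a prime, q an integer with gcd(q,p)=1, n an integer, and k a positive integer. Then p^{2k} binom(n + q/p, k) is an integer divisible by p. -/
open Finset
open scoped Nat

theorem factorial_dvd_prod_range_sub (a : ℤ) (k : ℕ) :
    (k ! : ℤ) ∣ ∏ i ∈ range k, (a - i) := by
  rw [← descPochhammer_eval_eq_prod_range, Polynomial.eval_eq_smeval,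
    Ring.descPochhammer_eq_factorial_smul_choose, nsmul_eq_mul]
  exact dvd_mul_right _ _

theorem dvd_prod_range_sub_mul_of_isCoprime {a b m : ℤ} {k : ℕ} (hbm : IsCoprime b m)
    (hm : m ∣ k !) : m ∣ ∏ i ∈ range k, (a - i * b) := by
  obtain ⟨u, w, huw⟩ := hbm
  have hub : u * b ≡ 1 [ZMOD m] := Int.modEq_iff_dvd.mpr ⟨w, by linarith⟩
  have hprod : u ^ k * ∏ i ∈ range k, (a - i * b) ≡ ∏ i ∈ range k, (u * a - i) [ZMOD m] :=
    calc u ^ k * ∏ i ∈ range k, (a - i * b) = ∏ i ∈ range k, (u * a - i * (u * b)) := by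
          rw [← card_range k, ← prod_const, card_range, ← prod_mul_distrib]
          exact prod_congr rfl fun i _ => by ring
      _ ≡ ∏ i ∈ range k, (u * a - i * 1) [ZMOD m] := by gcongr
      _ = ∏ i ∈ range k, (u * a - i) := by simp only [mul_one]
  have hmu : m ∣ u ^ k * ∏ i ∈ range k, (a - i * b) :=
    Int.modEq_zero_iff_dvd.mp (hprod.trans (Int.modEq_zero_iff_dvd.mpr
      (hm.trans (factorial_dvd_prod_range_sub _ _))))
  have hum : IsCoprime m (u ^ k) := (IsCoprime.pow_left ⟨b, w, by linarith⟩).symm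
  exact hum.dvd_of_dvd_mul_left hmu

theorem factorial_dvd_pow_mul_prod_range_sub_mul {p : ℤ} (hp : Prime p) (a : ℤ) {k : ℕ}
    (hk : k ≠ 0) : (k ! : ℤ) ∣ p ^ (k - 1) * ∏ i ∈ range k, (a - i * p) := by
  have hP : p.natAbs.Prime := Int.prime_iff_natAbs_prime.mp hp
  have : Fact p.natAbs.Prime := ⟨hP⟩
  have hcompl : Nat.Coprime p.natAbs (ordCompl[p.natAbs] k !) :=
    Nat.coprime_ordCompl hP (Nat.factorial_ne_zero k)
  have hproj : (ordProj[p.natAbs] k ! : ℤ) ∣ p ^ (k - 1) := by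
    have hv : (k !).factorization p.natAbs ≤ k - 1 := by
      rw [Nat.factorization_def _ hP]
      exact Nat.le_sub_one_of_lt (padicValNat_factorial_lt_of_ne_zero _ hk)
    push_cast
    exact (pow_dvd_pow _ hv).trans (pow_dvd_pow_of_dvd (abs_dvd_self p) _)
  have hcop : IsCoprime (ordProj[p.natAbs] k ! : ℤ) (ordCompl[p.natAbs] k ! : ℤ) :=
    Nat.isCoprime_iff_coprime.mpr (hcompl.pow_left _)
  rw [← Nat.ordProj_mul_ordCompl_eq_self (k !) p.natAbs, Nat.cast_mul]
  exact hcop.mul_dvd (hproj.mul_right _) (dvd_mul_of_dvd_right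
    (dvd_prod_range_sub_mul_of_isCoprime (Int.isCoprime_iff_nat_coprime.mpr hcompl)
      (Int.natCast_dvd_natCast.mpr (Nat.ordCompl_dvd _ _))) _)

theorem pow_mul_prod_range_div_sub {K : Type*} [Field K] {c : K} (hc : c ≠ 0) (x : K) (k : ℕ) :
    c ^ k * ∏ i ∈ range k, (x / c - i) = ∏ i ∈ range k, (x - i * c) := by
  rw [← card_range k, ← prod_const, card_range, ← prod_mul_distrib]
  exact prod_congr rfl fun i _ => by field_simp

theorem lucas_variant_three_general (p q n : ℤ) (hp : Prime p)
    (k : ℕ) (hk : 0 < k) :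
    ∃ m : ℤ, (p : ℚ) ^ (2 * k) * gchoose ((n : ℚ) + (q : ℚ) / (p : ℚ)) k = (m : ℚ)
      ∧ p ∣ m := by
  obtain ⟨c, hc⟩ := factorial_dvd_pow_mul_prod_range_sub_mul hp (p * n + q) hk.ne'
  refine ⟨p * c, ?_, dvd_mul_right p c⟩
  have hp0 : (p : ℚ) ≠ 0 := by exact_mod_cast hp.ne_zero
  have hx : (n : ℚ) + q / p = ((p * n + q : ℤ) : ℚ) / p := by push_cast; field_simp
  have hpow : (p : ℚ) ^ (2 * k) = p * p ^ (k - 1) * p ^ k := by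
    rw [← pow_succ', ← pow_add]; congr 1; omega
  have hcQ : (p : ℚ) ^ (k - 1) * ∏ i ∈ range k, (((p * n + q : ℤ) : ℚ) - i * p) = k ! * c := by
    exact_mod_cast hc
  rw [gchoose, hx, hpow, mul_div_assoc', mul_assoc, pow_mul_prod_range_div_sub hp0, mul_assoc, hcQ,
    mul_div_assoc, mul_div_cancel_left₀ _ (by positivity), Int.cast_mul]

/-- If `p` is prime, `gcd(q,p)=1`, `k > 0`, then `p^{2k} binom(n + q/p, k)`
is an integer divisible by `p`. -/
theorem lucas_variant_three (p q n : ℤ) (hp : Prime p) (hqp : Int.gcd q p = 1)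
    (k : ℕ) (hk : 0 < k) :
    ∃ m : ℤ, (p : ℚ) ^ (2 * k) * gchoose ((n : ℚ) + (q : ℚ) / (p : ℚ)) k = (m : ℚ)
      ∧ p ∣ m :=
  lucas_variant_three_general p q n hp k hk
end

section
/- The binomial identity binom(n+a+q/p-1, a) binom(n+k+a+q/p-1, k) binom(n+a, k+a) = binom(n+k+a+q/p-1, k+a) binom(n, k) binom(n+a, a) holds for all nonnegative integers a, n, k with k ≤ n and rational q/p. -/
/-!
Splitting the falling factorial `(y)_{m+l} = (y)_m (y-m)_l` gives
`C(y, m+l) C(m+l, m) = C(y, m) C(y-m, l)`. Applied to `C(n+k+a+r-1, k+a)` and to `C(n+a, k+a)`,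
both sides of the identity multiplied by `C(k+a, k)` become
`C(n+a+r-1, a) C(n+k+a+r-1, k) C(n, k) C(n+a, a)`.
-/

theorem prod_range_add_sub_natCast {R : Type*} [CommRing R] (y : R) (m l : ℕ) :
    ∏ i ∈ Finset.range (m + l), (y - i)
      = (∏ i ∈ Finset.range m, (y - i)) * ∏ i ∈ Finset.range l, (y - m - i) := by
  rw [Finset.prod_range_add]
  congr 1
  refine Finset.prod_congr rfl fun i _ => ?_
  push_cast
  ring

theorem gchoose_add_mul_choose (y : ℚ) (m l : ℕ) :
    gchoose y (m + l) * (m + l).choose m = gchoose y m * gchoose (y - m) l := by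
  have hfact : ((m + l).choose m : ℚ) * m.factorial * l.factorial = (m + l).factorial := by
    rw [Nat.choose_symm_add]
    exact_mod_cast Nat.add_choose_mul_factorial_mul_factorial m l
  have hchoose : ((m + l).choose m : ℚ) ≠ 0 := by
    exact_mod_cast (Nat.choose_pos (Nat.le_add_right m l)).ne'
  unfold gchoose
  rw [prod_range_add_sub_natCast, ← hfact]
  field_simp

theorem catbert_binomial_identity_general (a n k : ℕ) (r : ℚ) :
    gchoose ((n : ℚ) + (a : ℚ) + r - 1) a
        * gchoose ((n : ℚ) + (k : ℚ) + (a : ℚ) + r - 1) k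
        * gchoose ((n : ℚ) + (a : ℚ)) (k + a)
      = gchoose ((n : ℚ) + (k : ℚ) + (a : ℚ) + r - 1) (k + a)
        * gchoose ((n : ℚ)) k
        * gchoose ((n : ℚ) + (a : ℚ)) a := by
  set x : ℚ := n + a + r - 1
  have hupper : gchoose (x + k) (k + a) * (k + a).choose k = gchoose (x + k) k * gchoose x a := by
    simpa using gchoose_add_mul_choose (x + k) k a
  have hlower : gchoose (n + a) (k + a) * (k + a).choose k = gchoose (n + a) a * gchoose n k := by
    rw [add_comm k a, ← Nat.choose_symm_add]
    simpa using gchoose_add_mul_choose (n + a) a k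
  have hchoose : ((k + a).choose k : ℚ) ≠ 0 := by
    exact_mod_cast (Nat.choose_pos (Nat.le_add_right k a)).ne'
  have hx : (n : ℚ) + k + a + r - 1 = x + k := by ring
  rw [hx]
  refine mul_right_cancel₀ hchoose ?_
  linear_combination gchoose x a * gchoose (x + k) k * hlower
    - gchoose n k * gchoose (n + a) a * hupper

/-- The key binomial identity behind `NL = MK`. -/
theorem catbert_binomial_identity (a n k : ℕ) (hk : k ≤ n) (r : ℚ) :
    gchoose ((n : ℚ) + (a : ℚ) + r - 1) a
        * gchoose ((n : ℚ) + (k : ℚ) + (a : ℚ) + r - 1) k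
        * gchoose ((n : ℚ) + (a : ℚ)) (k + a)
      = gchoose ((n : ℚ) + (k : ℚ) + (a : ℚ) + r - 1) (k + a)
        * gchoose ((n : ℚ)) k
        * gchoose ((n : ℚ) + (a : ℚ)) a :=
  catbert_binomial_identity_general a n k r
end
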